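/- Let F = ((X,d),(f_i)_{i∈I}) be a generalized possibly infinite iterated function system of order m with (X,d) complete, such that all the functions f_i are φ-contractions for some comparison function φ. Then F has an attractor: there exists a unique set A_F ∈ ℬ(X) with F_F(A_F,…,A_F) = A_F. Moreover, for every α = α¹α²… ∈ Ω the set ∩_{k≥1} cl(f_{α¹…α^k}(A_F × ⋯ × A_F)) (m^k factors) is a singleton {π(α)}, and the resulting canonical projection π : Ω → X satisfies A_F = cl(π(Ω)). -/

import Mathlib

/-- Level `k` corresponds to `Ω_{k+1}` in the paper: `Ω₁ = I`, `Ω_{k+1} = (Ω_k)^m`. -/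
def OmegaLevel (I : Type) (m : ℕ) : ℕ → Type
  | 0 => I
  | k + 1 => Fin m → OmegaLevel I m k

/-- The generalized code space `Ω = Ω₁ × Ω₂ × ⋯`. -/
def GCS (I : Type) (m : ℕ) : Type :=
  ∀ k : ℕ, OmegaLevel I m k

/-- The first letter `α¹ ∈ I` of `α ∈ Ω`. -/
def GCS.head {I : Type} {m : ℕ} (α : GCS I m) : I := α 0

/-- `α(i)` : the sequence whose `k`-th term is the `i`-th component of `α^{k+1}`. -/
def GCS.shift {I : Type} {m : ℕ} (α : GCS I m) (i : Fin m) : GCS I m :=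
  fun k => α (k + 1) i

/-- A generalized possibly infinite iterated function system of order `m`:
a family of continuous maps `f_i : X^m → X` (with `X^m` carrying the maximum
metric, i.e. the product metric on `Fin m → X`) which is bounded as a family. -/
structure GIFS (I : Type) (m : ℕ) (X : Type) [MetricSpace X] where
  f : I → (Fin m → X) → X
  cont : ∀ i : I, Continuous (f i)
  bddFam : ∀ B : Set (Fin m → X), Bornology.IsBounded B →
    Bornology.IsBounded (⋃ i : I, f i '' B)

/-- `Word I m k` encodes the set of words `_{k+1}Ω = Ω₁ × ⋯ × Ω_{k+1}`, via the
bijection `α ↔ (α¹, (α(1),…,α(m)))`. -/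
def Word (I : Type) (m : ℕ) : ℕ → Type
  | 0 => I
  | k + 1 => I × (Fin m → Word I m k)

/-- `XP Y m k` is `Y^{m^k}`. -/
def XP (Y : Type) (m : ℕ) : ℕ → Type
  | 0 => Y
  | k + 1 => Fin m → XP Y m k

/-- Given a family `base = (f_i)_{i∈I}`, `f_i : Y^m → Y`, extend it to words by
`f_{α¹α²…α^{k+1}}(x₁,…,x_m) = f_{α¹}(f_{α(1)}(x₁),…,f_{α(m)}(x_m))`. -/
def tExt {I Y : Type} {m : ℕ} (base : I → (Fin m → Y) → Y) :
    ∀ k : ℕ, Word I m k → XP Y m (k + 1) → Y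
  | 0, i, x => base i (fun j => x j)
  | k + 1, w, x => base w.1 (fun j => tExt base k (w.2 j) (x j))

/-- The set `A^{m^k} ⊆ X^{m^k}`. -/
def allInXP {X : Type} {m : ℕ} (A : Set X) : ∀ k : ℕ, Set (XP X m k)
  | 0 => A
  | k + 1 => {x | ∀ j : Fin m, x j ∈ allInXP A k}

/-- The truncation `α ↦ α¹α²…α^{k+1} ∈ _{k+1}Ω` of an infinite word `α ∈ Ω`. -/
def trunc {I : Type} {m : ℕ} : ∀ k : ℕ, GCS I m → Word I m k
  | 0, α => α.head
  | k + 1, α => (α.head, fun j => trunc k (α.shift j))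

/-- The fractal operator `F_F(B₁,…,B_m) = cl(∪_{i∈I} f_i(B₁ × ⋯ × B_m))`. -/
def FracOpF {I X : Type} {m : ℕ} [MetricSpace X] (f : I → (Fin m → X) → X)
    (B : Fin m → Set X) : Set X :=
  closure (⋃ i : I, f i '' Set.univ.pi B)

/-- A comparison function `φ : [0,∞) → [0,∞)`: nondecreasing, right-continuous,
and `φ(t) < t` for `t > 0`. -/
def IsComparisonFun (φ : ℝ → ℝ) : Prop :=
  (∀ t : ℝ, 0 ≤ t → 0 ≤ φ t) ∧ MonotoneOn φ (Set.Ici 0) ∧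
    (∀ t : ℝ, 0 ≤ t → ContinuousWithinAt φ (Set.Ici t) t) ∧
    (∀ t : ℝ, 0 < t → φ t < t)

open Metric EMetric Filter Topology

namespace GIFSAux

variable {φ : ℝ → ℝ}

lemma phi_zero (hφ : IsComparisonFun φ) : φ 0 = 0 := by
  obtain ⟨h0, hmono, _, hlt⟩ := hφ
  rcases (h0 0 le_rfl).lt_or_eq with h | h
  · have h1 : φ 0 ≤ φ (φ 0) := hmono (Set.mem_Ici.2 le_rfl) (Set.mem_Ici.2 h.le) h.le
    have h2 := hlt (φ 0) h
    linarith
  · exact h.symm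

lemma phi_le (hφ : IsComparisonFun φ) (t : ℝ) (ht : 0 ≤ t) : φ t ≤ t := by
  rcases ht.lt_or_eq with h | h
  · exact (hφ.2.2.2 t h).le
  · rw [← h, phi_zero hφ]

lemma iter_nonneg (hφ : IsComparisonFun φ) (n : ℕ) (t : ℝ) (ht : 0 ≤ t) : 0 ≤ φ^[n] t := by
  induction n generalizing t with
  | zero => simpa
  | succ n ih => rw [Function.iterate_succ_apply]; exact ih _ (hφ.1 t ht)

lemma iter_mono (hφ : IsComparisonFun φ) (n : ℕ) {s t : ℝ} (hs : 0 ≤ s) (hst : s ≤ t) :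
    φ^[n] s ≤ φ^[n] t := by
  induction n generalizing s t with
  | zero => simpa
  | succ n ih =>
    rw [Function.iterate_succ_apply, Function.iterate_succ_apply]
    exact ih (hφ.1 s hs) (hφ.2.1 (Set.mem_Ici.2 hs) (Set.mem_Ici.2 (hs.trans hst)) hst)

lemma iter_le (hφ : IsComparisonFun φ) (n : ℕ) {t : ℝ} (ht : 0 ≤ t) : φ^[n] t ≤ t := by
  induction n with
  | zero => simp
  | succ n ih =>
    rw [Function.iterate_succ_apply']
    exact (phi_le hφ _ (iter_nonneg hφ n t ht)).trans ih

lemma iter_succ_le (hφ : IsComparisonFun φ) (n : ℕ) {t : ℝ} (ht : 0 ≤ t) :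
    φ^[n + 1] t ≤ φ^[n] t := by
  rw [Function.iterate_succ_apply]
  exact iter_mono hφ n (hφ.1 t ht) (phi_le hφ t ht)

lemma tendsto_iter (hφ : IsComparisonFun φ) {t : ℝ} (ht : 0 ≤ t) :
    Tendsto (fun n => φ^[n] t) atTop (𝓝 0) := by
  set a : ℕ → ℝ := fun n => φ^[n] t with ha
  have hanti : Antitone a := antitone_nat_of_succ_le (fun n => iter_succ_le hφ n ht)
  have hbdd : BddBelow (Set.range a) := by
    refine ⟨0, ?_⟩
    rintro x ⟨n, rfl⟩
    exact iter_nonneg hφ n t ht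
  have hlim := tendsto_atTop_ciInf hanti hbdd
  set L := ⨅ n, a n with hL
  have hL0 : 0 ≤ L := le_ciInf (fun n => iter_nonneg hφ n t ht)
  have hge : ∀ n, L ≤ a n := fun n => ciInf_le hbdd n
  have h1 : Tendsto a atTop (𝓝[Set.Ici L] L) :=
    tendsto_nhdsWithin_of_tendsto_nhds_of_eventually_within _ hlim
      (Eventually.of_forall (fun n => hge n))
  have h2 : Tendsto (fun n => φ (a n)) atTop (𝓝 (φ L)) :=
    (hφ.2.2.1 L hL0).tendsto.comp h1
  have h3 : Tendsto (fun n => a (n + 1)) atTop (𝓝 L) :=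
    hlim.comp (tendsto_add_atTop_nat 1)
  have heq : ∀ n, φ (a n) = a (n + 1) := fun n =>
    (Function.iterate_succ_apply' φ n t).symm
  have hphiL : φ L = L := tendsto_nhds_unique (by simpa only [heq] using h2) h3
  have hL0' : L = 0 := by
    by_contra h
    have hLpos : 0 < L := hL0.lt_of_ne (Ne.symm h)
    exact absurd hphiL (ne_of_lt (hφ.2.2.2 L hLpos))
  rw [← hL0']
  exact hlim

end GIFSAux

namespace GIFSAux
section Structural
variable {I X : Type} [MetricSpace X] {m : ℕ}

/-- The max-metric on `XP X m k`. -/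
def dXP (hm : 0 < m) : ∀ k, XP X m k → XP X m k → ℝ
  | 0, x, y => dist (show X from x) (show X from y)
  | k + 1, x, y =>
      Finset.univ.sup' ⟨⟨0, hm⟩, Finset.mem_univ _⟩
        (fun j : Fin m => dXP hm k (x j) (y j))

lemma dXP_nonneg (hm : 0 < m) : ∀ k (x y : XP X m k), 0 ≤ dXP hm k x y
  | 0, x, y => dist_nonneg
  | k + 1, x, y => by
      have h := dXP_nonneg hm k (x ⟨0, hm⟩) (y ⟨0, hm⟩)
      simp only [dXP]
      exact h.trans (Finset.le_sup' (fun j : Fin m => dXP hm k (x j) (y j))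
        (Finset.mem_univ _))

lemma dXP_le (hm : 0 < m) {k : ℕ} {x y : XP X m (k+1)} {r : ℝ} (j : Fin m)
    (h : dXP hm (k+1) x y ≤ r) : dXP hm k (x j) (y j) ≤ r := by
  simp only [dXP] at h
  exact le_trans (Finset.le_sup' (fun j : Fin m => dXP hm k (x j) (y j))
    (Finset.mem_univ j)) h

lemma dXP_le_iff (hm : 0 < m) {k : ℕ} {x y : XP X m (k+1)} {r : ℝ} :
    dXP hm (k+1) x y ≤ r ↔ ∀ j, dXP hm k (x j) (y j) ≤ r := by
  simp only [dXP]
  constructor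
  · exact fun h j => le_trans (Finset.le_sup' (fun j : Fin m => dXP hm k (x j) (y j))
      (Finset.mem_univ j)) h
  · exact fun h => Finset.sup'_le _ _ (fun j _ => h j)

/-- constant tuple -/
def cstXP (a : X) : ∀ k, XP X m k
  | 0 => a
  | k + 1 => fun _ => cstXP a k

lemma cstXP_mem {A : Set X} {a : X} (ha : a ∈ A) : ∀ k, cstXP (m := m) a k ∈ allInXP A k
  | 0 => ha
  | k + 1 => fun _ => cstXP_mem ha k

lemma allInXP_nonempty {A : Set X} (hA : A.Nonempty) (k : ℕ) :
    (allInXP (m := m) A k).Nonempty :=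
  ⟨cstXP hA.choose k, cstXP_mem hA.choose_spec k⟩

lemma dXP_le_diam (hm : 0 < m) {A : Set X} (hA : Bornology.IsBounded A) :
    ∀ k (x y : XP X m k), x ∈ allInXP A k → y ∈ allInXP A k →
      dXP hm k x y ≤ Metric.diam A
  | 0, x, y, hx, hy => Metric.dist_le_diam_of_mem hA hx hy
  | k + 1, x, y, hx, hy => by
      simp only [dXP]
      exact Finset.sup'_le _ _ (fun j _ => dXP_le_diam hm hA k (x j) (y j) (hx j) (hy j))

variable (f : I → (Fin m → X) → X)

/-- apply the last-level letters of `α` -/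
def mapLast : ∀ k, GCS I m → XP X m (k + 2) → XP X m (k + 1)
  | 0, α, x => fun j => f ((α.shift j).head) (x j)
  | k + 1, α, x => fun j => mapLast k (α.shift j) (x j)

lemma tExt_peel : ∀ (k : ℕ) (α : GCS I m) (x : XP X m (k + 2)),
    tExt f (k + 1) (trunc (k + 1) α) x = tExt f k (trunc k α) (mapLast f k α x)
  | 0, α, x => rfl
  | k + 1, α, x => by
      show f α.head _ = f α.head _
      congr 1
      funext j
      exact tExt_peel k (α.shift j) (x j)

variable {A : Set X}

lemma mapLast_mem (hfix : ∀ (i : I) (x : Fin m → X), (∀ j, x j ∈ A) → f i x ∈ A) :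
    ∀ (k : ℕ) (α : GCS I m) (x : XP X m (k + 2)), x ∈ allInXP A (k + 2) →
      mapLast f k α x ∈ allInXP A (k + 1)
  | 0, α, x, hx => fun j => hfix _ _ (hx j)
  | k + 1, α, x, hx => fun j => mapLast_mem hfix k (α.shift j) (x j) (hx j)

lemma tExt_mem (hfix : ∀ (i : I) (x : Fin m → X), (∀ j, x j ∈ A) → f i x ∈ A) :
    ∀ (k : ℕ) (w : Word I m k) (x : XP X m (k + 1)), x ∈ allInXP A (k + 1) →
      tExt f k w x ∈ A
  | 0, i, x, hx => hfix _ _ (fun j => hx j)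
  | k + 1, w, x, hx => hfix _ _ (fun j => tExt_mem hfix k (w.2 j) (x j) (hx j))

lemma tExt_dist (hm : 0 < m) {φ : ℝ → ℝ} (hφ : IsComparisonFun φ)
    (hc : ∀ (i : I) (x y : Fin m → X), dist (f i x) (f i y) ≤ φ (dist x y)) :
    ∀ (k : ℕ) (w : Word I m k) (x y : XP X m (k + 1)),
      dist (tExt f k w x) (tExt f k w y) ≤ φ^[k + 1] (dXP hm (k + 1) x y)
  | 0, i, x, y => by
      have h1 : dist (show Fin m → X from fun j => x j) (show Fin m → X from fun j => y j)
          ≤ dXP hm 1 x y := by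
        have h2 : ∀ j : Fin m, dXP hm 0 (x j) (y j) ≤ dXP hm 1 x y :=
          fun j => dXP_le hm j le_rfl
        rw [dist_pi_le_iff (dXP_nonneg hm 1 x y)]
        intro j
        exact h2 j
      calc dist (tExt f 0 i x) (tExt f 0 i y)
            ≤ φ (dist (show Fin m → X from fun j => x j) (show Fin m → X from fun j => y j)) :=
            hc i _ _
        _ ≤ φ (dXP hm 1 x y) := hφ.2.1 (Set.mem_Ici.2 dist_nonneg)
            (Set.mem_Ici.2 (dist_nonneg.trans h1)) h1
        _ = φ^[1] (dXP hm 1 x y) := by simp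
  | k + 1, w, x, y => by
      have hd0 : 0 ≤ dXP hm (k + 2) x y := dXP_nonneg hm _ x y
      have hrec : ∀ j, dist (tExt f k (w.2 j) (x j)) (tExt f k (w.2 j) (y j)) ≤
          φ^[k + 1] (dXP hm (k + 2) x y) := by
        intro j
        exact (tExt_dist hm hφ hc k (w.2 j) (x j) (y j)).trans
          (iter_mono hφ (k + 1) (dXP_nonneg hm _ _ _) (dXP_le hm j le_rfl))
      have h1 : dist (show Fin m → X from fun j => tExt f k (w.2 j) (x j))
          (show Fin m → X from fun j => tExt f k (w.2 j) (y j)) ≤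
          φ^[k + 1] (dXP hm (k + 2) x y) := by
        rw [dist_pi_le_iff (iter_nonneg hφ _ _ hd0)]
        exact hrec
      calc dist (tExt f (k + 1) w x) (tExt f (k + 1) w y)
          ≤ φ (dist (show Fin m → X from fun j => tExt f k (w.2 j) (x j))
              (show Fin m → X from fun j => tExt f k (w.2 j) (y j))) :=
            hc w.1 _ _
        _ ≤ φ (φ^[k + 1] (dXP hm (k + 2) x y)) := hφ.2.1 (Set.mem_Ici.2 dist_nonneg)
            (Set.mem_Ici.2 (dist_nonneg.trans h1)) h1
        _ = φ^[k + 2] (dXP hm (k + 2) x y) := (Function.iterate_succ_apply' φ (k + 1) _).symm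

end Structural
end GIFSAux

namespace GIFSAux
section Ext
variable {I : Type} [Nonempty I] {m : ℕ}

noncomputable def dflt (I : Type) [Nonempty I] (m : ℕ) : ∀ k, OmegaLevel I m k :=
  fun k => Nat.rec (motive := fun k => OmegaLevel I m k)
    (Classical.arbitrary I) (fun _ d => fun _ => d) k

noncomputable def extendAux : ∀ k, Word I m k → ∀ l, OmegaLevel I m l
  | 0, i, 0 => i
  | 0, _, l + 1 => dflt I m (l + 1)
  | _ + 1, w, 0 => w.1
  | k + 1, w, l + 1 => fun j => extendAux k (w.2 j) l

noncomputable def extend (k : ℕ) (w : Word I m k) : GCS I m := fun l => extendAux k w l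

lemma trunc_extend : ∀ k (w : Word I m k), trunc k (extend k w) = w
  | 0, _ => rfl
  | k + 1, w => by
      show (_, _) = _
      have h1 : ∀ j : Fin m, (extend (k + 1) w).shift j = extend k (w.2 j) := by
        intro j; funext l; rfl
      have h2 : (fun j => trunc k ((extend (k + 1) w).shift j)) = w.2 := by
        funext j
        rw [h1 j, trunc_extend k (w.2 j)]
      rw [h2]
      show (w.1, w.2) = w
      exact Prod.mk.eta

end Ext

section Union
variable {I X : Type} [MetricSpace X] {m : ℕ} (f : I → (Fin m → X) → X)

lemma subset_tExt_union {A : Set X} (k : ℕ) (i : I) :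
    f i '' Set.univ.pi (fun _ => (⋃ w : Word I m k, tExt f k w '' allInXP A (k + 1))) ⊆
      ⋃ w : Word I m (k + 1), tExt f (k + 1) w '' allInXP A (k + 2) := by
  rintro - ⟨b, hb, rfl⟩
  have hb' : ∀ j, ∃ (w : Word I m k) (x : XP X m (k + 1)),
      x ∈ allInXP A (k + 1) ∧ tExt f k w x = b j := by
    intro j
    obtain ⟨s, ⟨w, rfl⟩, hs⟩ := hb j (Set.mem_univ j)
    obtain ⟨x, hx, hxe⟩ := hs
    exact ⟨w, x, hx, hxe⟩
  choose w x hx he using hb'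
  refine Set.mem_iUnion.2 ⟨(i, w), ⟨x, hx, ?_⟩⟩
  show f i (fun j => tExt f k (w j) (x j)) = f i b
  congr 1
  funext j
  exact he j

lemma A_eq_union {A : Set X} (hAcl : IsClosed A)
    (hfix_eq : closure (⋃ i : I, f i '' Set.univ.pi fun _ => A) = A)
    (hcont : ∀ i, Continuous (f i)) :
    ∀ k : ℕ, A = closure (⋃ w : Word I m k, tExt f k w '' allInXP A (k + 1))
  | 0 => by
      have hsets : (⋃ i : I, f i '' Set.univ.pi fun _ => A) =
          ⋃ w : Word I m 0, tExt f 0 w '' allInXP A 1 := by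
        ext y
        simp only [Set.mem_iUnion, Set.mem_image]
        constructor
        · rintro ⟨i, a, ha, rfl⟩
          exact ⟨i, a, fun j => ha j (Set.mem_univ j), rfl⟩
        · rintro ⟨w, x, hx, rfl⟩
          exact ⟨w, x, fun j _ => hx j, rfl⟩
      conv_lhs => rw [← hfix_eq]
      rw [hsets]
  | k + 1 => by
      have hfix : ∀ (i : I) (x : Fin m → X), (∀ j, x j ∈ A) → f i x ∈ A := by
        intro i x hxA
        rw [← hfix_eq]
        exact subset_closure (Set.mem_iUnion.2 ⟨i, x, fun j _ => hxA j, rfl⟩)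
      have hIH := A_eq_union hAcl hfix_eq hcont k
      apply Set.Subset.antisymm
      · conv_lhs => rw [← hfix_eq]
        refine closure_minimal (Set.iUnion_subset fun i => ?_) isClosed_closure
        calc f i '' Set.univ.pi (fun _ => A)
            = f i '' Set.univ.pi (fun _ =>
                closure (⋃ w : Word I m k, tExt f k w '' allInXP A (k + 1))) := by
              rw [← hIH]
          _ = f i '' closure (Set.univ.pi fun _ =>
                (⋃ w : Word I m k, tExt f k w '' allInXP A (k + 1))) := by
              rw [closure_pi_set]
          _ ⊆ closure (f i '' Set.univ.pi fun _ =>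
                (⋃ w : Word I m k, tExt f k w '' allInXP A (k + 1))) :=
              image_closure_subset_closure_image (hcont i)
          _ ⊆ closure (⋃ w : Word I m (k + 1), tExt f (k + 1) w '' allInXP A (k + 2)) :=
              closure_mono (subset_tExt_union f k i)
      · refine closure_minimal (Set.iUnion_subset fun w => ?_) hAcl
        rintro - ⟨x, hx, rfl⟩
        exact tExt_mem f hfix (k + 1) w x hx

end Union

section Contract
open ENNReal
variable {I X : Type} [MetricSpace X] {m : ℕ}

lemma fracOp_contract (hm : 0 < m) (f : I → (Fin m → X) → X) {φ : ℝ → ℝ}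
    (hφ : IsComparisonFun φ)
    (hc : ∀ (i : I) (x y : Fin m → X), dist (f i x) (f i y) ≤ φ (dist x y))
    {A B : Set X} {r : ℝ} (hr : 0 ≤ r)
    (h : hausdorffEDist A B ≤ ENNReal.ofReal r) :
    hausdorffEDist (FracOpF f fun _ => A) (FracOpF f fun _ => B) ≤ ENNReal.ofReal (φ r) := by
  have key : ∀ r' : ℝ, r < r' → ∀ (A B : Set X), hausdorffEDist A B ≤ ENNReal.ofReal r →
      ∀ x ∈ ⋃ i : I, f i '' Set.univ.pi (fun _ => A),
        ∃ y ∈ ⋃ i : I, f i '' Set.univ.pi (fun _ => B),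
          edist x y ≤ ENNReal.ofReal (φ r') := by
    intro r' hrr' A B hAB x hx
    rw [Set.mem_iUnion] at hx
    obtain ⟨i, a, ha, rfl⟩ := hx
    have hr'pos : 0 < r' := hr.trans_lt hrr'
    have hlt : hausdorffEDist A B < ENNReal.ofReal r' :=
      lt_of_le_of_lt hAB ((ENNReal.ofReal_lt_ofReal_iff hr'pos).2 hrr')
    have hbp : ∀ j : Fin m, ∃ b ∈ B, edist (a j) b < ENNReal.ofReal r' := fun j =>
      exists_edist_lt_of_hausdorffEdist_lt (ha j (Set.mem_univ j)) hlt
    choose b hb hab using hbp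
    refine ⟨f i b, Set.mem_iUnion.2 ⟨i, b, fun j _ => hb j, rfl⟩, ?_⟩
    have hdab : dist a b ≤ r' := by
      rw [dist_pi_le_iff hr'pos.le]
      intro j
      have h1 := hab j
      rw [edist_dist] at h1
      exact ((ENNReal.ofReal_lt_ofReal_iff hr'pos).1 h1).le
    rw [edist_dist]
    exact ENNReal.ofReal_le_ofReal ((hc i a b).trans
      (hφ.2.1 (Set.mem_Ici.2 dist_nonneg) (Set.mem_Ici.2 hr'pos.le) hdab))
  have step : ∀ r' : ℝ, r < r' →
      hausdorffEDist (FracOpF f fun _ => A) (FracOpF f fun _ => B) ≤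
        ENNReal.ofReal (φ r') := by
    intro r' hrr'
    unfold FracOpF
    rw [EMetric.hausdorffEdist_closure₁, EMetric.hausdorffEdist_closure₂]
    exact hausdorffEdist_le_of_mem_edist (key r' hrr' A B h)
      (key r' hrr' B A (by rwa [EMetric.hausdorffEdist_comm]))
  refine ENNReal.le_of_forall_pos_le_add fun ε hε _ => ?_
  have hcw := hφ.2.2.1 r hr
  rw [Metric.continuousWithinAt_iff] at hcw
  have hε' : (0 : ℝ) < ε := by exact_mod_cast hε
  obtain ⟨δ, hδ, hball⟩ := hcw ε hε'
  have hφr' : φ (r + δ / 2) ≤ φ r + ε := by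
    have hmem : r + δ / 2 ∈ Set.Ici r := Set.mem_Ici.2 (by linarith)
    have hdist : dist (r + δ / 2) r < δ := by
      rw [Real.dist_eq]
      rw [abs_of_nonneg (by linarith)]
      linarith
    have := hball hmem hdist
    rw [Real.dist_eq] at this
    have := abs_lt.1 this
    linarith [this.1, this.2]
  calc hausdorffEDist (FracOpF f fun _ => A) (FracOpF f fun _ => B)
      ≤ ENNReal.ofReal (φ (r + δ / 2)) := step _ (by linarith)
    _ ≤ ENNReal.ofReal (φ r + ε) := ENNReal.ofReal_le_ofReal hφr'
    _ ≤ ENNReal.ofReal (φ r) + ENNReal.ofReal ε := ENNReal.ofReal_add_le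
    _ = ENNReal.ofReal (φ r) + ε := by rw [ENNReal.ofReal_coe_nnreal]

end Contract
end GIFSAux

open Metric EMetric ENNReal Filter Topology GIFSAux

/-- STATEMENT 18 (Theorem 1.13 / Remark 1.14 ii): if `(X,d)` is complete and all
`f_i` are `φ`-contractions for a comparison function `φ`, then `F` has an
attractor: a unique nonempty closed bounded `A_F` with `F_F(A_F,…,A_F) = A_F`;
moreover, for any such `A_F` and every `α ∈ Ω` the set
`∩_{k≥1} cl(f_{α¹…α^k}(A_F × ⋯ × A_F))` is a singleton `{π(α)}`, and the
resulting canonical projection `π : Ω → X` satisfies `A_F = cl(π(Ω))`. -/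
theorem attractor_and_canonical_projection (I : Type) [Nonempty I]
    (m : ℕ) (hm : 1 ≤ m) (X : Type) [MetricSpace X] [CompleteSpace X] [Nonempty X]
    (F : GIFS I m X) (φ : ℝ → ℝ) (hφ : IsComparisonFun φ)
    (hc : ∀ (i : I) (x y : Fin m → X), dist (F.f i x) (F.f i y) ≤ φ (dist x y)) :
    (∃! A : Set X, A.Nonempty ∧ IsClosed A ∧ Bornology.IsBounded A ∧
      FracOpF F.f (fun _ => A) = A) ∧
    ∀ A : Set X, A.Nonempty → IsClosed A → Bornology.IsBounded A →
      FracOpF F.f (fun _ => A) = A →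
      ∃ π : GCS I m → X,
        (∀ α : GCS I m,
          (⋂ k : ℕ, closure (tExt F.f k (trunc k α) '' allInXP A (k + 1)))
            = {π α}) ∧
        closure (Set.range π) = A := by
  have hm0 : 0 < m := hm
  haveI : Nonempty (Fin m) := ⟨⟨0, hm0⟩⟩
  obtain ⟨b⟩ := ‹Nonempty X›
  obtain ⟨i0⟩ := ‹Nonempty I›
  constructor
  · -- Part 1 : existence and uniqueness of the attractor
    set S : ℕ → Set X := fun l =>
      Nat.rec ({b} : Set X) (fun _ B => FracOpF F.f (fun _ => B)) l with hSdef
    have hSsucc : ∀ l, S (l + 1) = FracOpF F.f (fun _ => S l) := fun l => rfl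
    have hSne : ∀ l, (S l).Nonempty := by
      intro l
      induction l with
      | zero => exact ⟨b, rfl⟩
      | succ l ih =>
        obtain ⟨p, hp⟩ := ih
        exact Set.Nonempty.closure
          ⟨F.f i0 (fun _ => p), Set.mem_iUnion.2 ⟨i0, fun _ => p, fun j _ => hp, rfl⟩⟩
    have hScl : ∀ l, IsClosed (S l) := by
      intro l
      cases l with
      | zero => exact isClosed_singleton
      | succ l => exact isClosed_closure
    have hS1bdd : Bornology.IsBounded (S 1) := by
      refine Bornology.IsBounded.closure ?_
      exact F.bddFam _ (Bornology.IsBounded.pi (fun _ => Bornology.isBounded_singleton))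
    set r0 : ℝ := (hausdorffEDist (S 0) (S 1)).toReal with hr0def
    have hfin : hausdorffEDist (S 0) (S 1) ≠ ⊤ :=
      Metric.hausdorffEdist_ne_top_of_nonempty_of_bounded (hSne 0) (hSne 1)
        Bornology.isBounded_singleton hS1bdd
    have hr0 : 0 ≤ r0 := ENNReal.toReal_nonneg
    have h01 : hausdorffEDist (S 0) (S 1) ≤ ENNReal.ofReal r0 :=
      le_of_eq (ENNReal.ofReal_toReal hfin).symm
    have hD : ∀ l, hausdorffEDist (S l) (S (l + 1)) ≤ ENNReal.ofReal (φ^[l] r0) := by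
      intro l
      induction l with
      | zero => simpa using h01
      | succ l ih =>
        rw [Function.iterate_succ_apply']
        exact fracOp_contract hm0 F.f hφ hc (iter_nonneg hφ l r0 hr0) ih
    have key : ∀ ε : ℝ, 0 < ε → ∃ N, ∀ l, N ≤ l →
        hausdorffEDist (S N) (S l) ≤ ENNReal.ofReal ε := by
      intro ε hε
      have hδ : 0 < ε - φ ε := by have := hφ.2.2.2 ε hε; linarith
      obtain ⟨N, hN⟩ := eventually_atTop.1 ((tendsto_iter hφ hr0).eventually (gt_mem_nhds hδ))
      refine ⟨N, fun l hl => ?_⟩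
      induction l, hl using Nat.le_induction with
      | base => simp [EMetric.hausdorffEdist_self]
      | succ l hl ih =>
        calc hausdorffEDist (S N) (S (l + 1))
            ≤ hausdorffEDist (S N) (S (N + 1)) + hausdorffEDist (S (N + 1)) (S (l + 1)) :=
              EMetric.hausdorffEdist_triangle
          _ ≤ ENNReal.ofReal (ε - φ ε) + ENNReal.ofReal (φ ε) := by
              refine add_le_add ((hD N).trans (ENNReal.ofReal_le_ofReal (hN N le_rfl).le)) ?_
              exact fracOp_contract hm0 F.f hφ hc hε.le ih
          _ = ENNReal.ofReal ε := by
              rw [← ENNReal.ofReal_add (by linarith) (hφ.1 ε hε.le)]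
              ring_nf
    have hS0l : ∀ l, hausdorffEDist (S 0) (S l) ≤ ENNReal.ofReal (l * r0) := by
      intro l
      induction l with
      | zero => simp [EMetric.hausdorffEdist_self]
      | succ l ih =>
        calc hausdorffEDist (S 0) (S (l + 1))
            ≤ hausdorffEDist (S 0) (S l) + hausdorffEDist (S l) (S (l + 1)) :=
              EMetric.hausdorffEdist_triangle
          _ ≤ ENNReal.ofReal (l * r0) + ENNReal.ofReal (φ^[l] r0) := add_le_add ih (hD l)
          _ ≤ ENNReal.ofReal (l * r0) + ENNReal.ofReal r0 := by
              exact add_le_add le_rfl (ENNReal.ofReal_le_ofReal (iter_le hφ l hr0))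
          _ = ENNReal.ofReal ((l + 1 : ℕ) * r0) := by
              rw [← ENNReal.ofReal_add (by positivity) hr0]
              congr 1
              push_cast
              ring
    obtain ⟨N₁, hN₁⟩ := key 1 one_pos
    set M : ℝ := (N₁ : ℝ) * r0 + 1 with hMdef
    have hM0 : 0 ≤ M := by positivity
    have hS0M : ∀ l, hausdorffEDist (S 0) (S l) ≤ ENNReal.ofReal M := by
      intro l
      rcases le_or_gt l N₁ with h | h
      · refine (hS0l l).trans (ENNReal.ofReal_le_ofReal ?_)
        have : (l : ℝ) ≤ (N₁ : ℝ) := by exact_mod_cast h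
        nlinarith
      · calc hausdorffEDist (S 0) (S l)
            ≤ hausdorffEDist (S 0) (S N₁) + hausdorffEDist (S N₁) (S l) :=
              EMetric.hausdorffEdist_triangle
          _ ≤ ENNReal.ofReal ((N₁ : ℝ) * r0) + ENNReal.ofReal 1 :=
              add_le_add (hS0l N₁) (hN₁ l h.le)
          _ = ENNReal.ofReal M := by
              rw [← ENNReal.ofReal_add (by positivity) zero_le_one]
    set Scl : ℕ → TopologicalSpace.Closeds X := fun l => ⟨S l, hScl l⟩ with hScldef
    have hcau : CauchySeq Scl := by
      rw [EMetric.cauchySeq_iff]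
      intro ε hε
      obtain ⟨ρ, hρ0, hρε⟩ := ENNReal.lt_iff_exists_nnreal_btwn.1 hε
      have hρ0' : (0 : ℝ) < (ρ : ℝ) := by exact_mod_cast ENNReal.coe_pos.1 hρ0
      obtain ⟨N, hN⟩ := key ((ρ : ℝ) / 2) (by linarith)
      refine ⟨N, fun p hp q hq => ?_⟩
      have hpq : edist (Scl p) (Scl q) = hausdorffEDist (S p) (S q) :=
        EMetric.Closeds.edist_eq
      calc edist (Scl p) (Scl q) = hausdorffEDist (S p) (S q) := hpq
        _ ≤ hausdorffEDist (S p) (S N) + hausdorffEDist (S N) (S q) :=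
            EMetric.hausdorffEdist_triangle
        _ ≤ ENNReal.ofReal ((ρ : ℝ) / 2) + ENNReal.ofReal ((ρ : ℝ) / 2) := by
            refine add_le_add ?_ (hN q hq)
            rw [EMetric.hausdorffEdist_comm]
            exact hN p hp
        _ = ENNReal.ofReal (ρ : ℝ) := by
            rw [← ENNReal.ofReal_add (by linarith) (by linarith)]
            ring_nf
        _ = (ρ : ℝ≥0∞) := ENNReal.ofReal_coe_nnreal
        _ < ε := hρε
    obtain ⟨Acl, hAcl⟩ := cauchySeq_tendsto_of_complete hcau
    set A₀ : Set X := (Acl : Set X) with hA₀def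
    have hA₀cl : IsClosed A₀ := Acl.isClosed
    have htendA : ∀ ε : ℝ≥0∞, 0 < ε → ∃ N, ∀ l, N ≤ l →
        hausdorffEDist (S l) A₀ < ε := by
      intro ε hε
      obtain ⟨N, hN⟩ := (EMetric.tendsto_atTop.1 hAcl) ε hε
      refine ⟨N, fun l hl => ?_⟩
      have := hN l hl
      rwa [EMetric.Closeds.edist_eq] at this
    have hA₀ne : A₀.Nonempty := by
      obtain ⟨N, hN⟩ := htendA 1 one_pos
      exact EMetric.nonempty_of_hausdorffEdist_ne_top (hSne N) (hN N le_rfl).ne_top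
    have hA₀bdd : Bornology.IsBounded A₀ := by
      obtain ⟨N, hN⟩ := htendA 1 one_pos
      have h1 : hausdorffEDist A₀ (S 0) < ENNReal.ofReal (M + 2) := by
        calc hausdorffEDist A₀ (S 0)
            ≤ hausdorffEDist A₀ (S N) + hausdorffEDist (S N) (S 0) :=
              EMetric.hausdorffEdist_triangle
          _ ≤ 1 + ENNReal.ofReal M := by
              refine add_le_add ?_ ?_
              · rw [EMetric.hausdorffEdist_comm]; exact (hN N le_rfl).le
              · rw [EMetric.hausdorffEdist_comm]; exact hS0M N
          _ = ENNReal.ofReal (M + 1) := by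
              rw [ENNReal.ofReal_add hM0 zero_le_one, ENNReal.ofReal_one, add_comm]
          _ < ENNReal.ofReal (M + 2) := by
              rw [ENNReal.ofReal_lt_ofReal_iff (by linarith)]
              linarith
      refine Bornology.IsBounded.subset (Metric.isBounded_ball (x := b) (r := M + 2)) ?_
      intro x hx
      obtain ⟨y, hy, hxy⟩ := exists_edist_lt_of_hausdorffEdist_lt hx h1
      have hyb : y = b := hy
      rw [Metric.mem_ball, dist_comm]
      rw [hyb] at hxy
      rw [edist_dist] at hxy
      rw [dist_comm]
      exact (ENNReal.ofReal_lt_ofReal_iff (by linarith)).1 hxy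
    have hA₀fix : FracOpF F.f (fun _ => A₀) = A₀ := by
      have hzero : hausdorffEDist (FracOpF F.f (fun _ => A₀)) A₀ = 0 := by
        by_contra hne
        have hpos : 0 < hausdorffEDist (FracOpF F.f (fun _ => A₀)) A₀ := zero_lt_iff.2 hne
        obtain ⟨ρ, hρ0, hρh⟩ := ENNReal.lt_iff_exists_nnreal_btwn.1 hpos
        have hρ0' : (0 : ℝ) < (ρ : ℝ) := by exact_mod_cast ENNReal.coe_pos.1 hρ0
        have he : (0 : ℝ) < (ρ : ℝ) / 4 := by linarith
        obtain ⟨N, hN⟩ := htendA (ENNReal.ofReal ((ρ : ℝ) / 4)) (ENNReal.ofReal_pos.2 he)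
        have hl1 := hN N le_rfl
        have hl2 := hN (N + 1) (Nat.le_succ N)
        have hcontr : hausdorffEDist (FracOpF F.f (fun _ => A₀)) A₀ ≤
            ENNReal.ofReal ((ρ : ℝ) / 2) := by
          calc hausdorffEDist (FracOpF F.f (fun _ => A₀)) A₀
              ≤ hausdorffEDist (FracOpF F.f (fun _ => A₀)) (S (N + 1)) +
                hausdorffEDist (S (N + 1)) A₀ := EMetric.hausdorffEdist_triangle
            _ ≤ ENNReal.ofReal (φ ((ρ : ℝ) / 4)) + ENNReal.ofReal ((ρ : ℝ) / 4) := by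
                refine add_le_add ?_ hl2.le
                refine fracOp_contract hm0 F.f hφ hc he.le ?_
                rw [EMetric.hausdorffEdist_comm]
                exact hl1.le
            _ ≤ ENNReal.ofReal ((ρ : ℝ) / 4) + ENNReal.ofReal ((ρ : ℝ) / 4) :=
                add_le_add (ENNReal.ofReal_le_ofReal (phi_le hφ _ he.le)) le_rfl
            _ = ENNReal.ofReal ((ρ : ℝ) / 2) := by
                rw [← ENNReal.ofReal_add (by linarith) (by linarith)]
                ring_nf
        have hlt : ENNReal.ofReal ((ρ : ℝ) / 2) < (ρ : ℝ≥0∞) := by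
          rw [← ENNReal.ofReal_coe_nnreal, ENNReal.ofReal_lt_ofReal_iff hρ0']
          linarith
        exact absurd (hcontr.trans_lt (hlt.trans hρh)) (lt_irrefl _)
      have hcc := EMetric.hausdorffEdist_zero_iff_closure_eq_closure.1 hzero
      have hclbig : IsClosed (FracOpF F.f (fun _ => A₀)) := isClosed_closure
      rwa [hclbig.closure_eq, hA₀cl.closure_eq] at hcc
    refine ⟨A₀, ⟨hA₀ne, hA₀cl, hA₀bdd, hA₀fix⟩, ?_⟩
    rintro A' ⟨hA'ne, hA'cl, hA'bdd, hA'fix⟩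
    have hfin' : hausdorffEDist A' A₀ ≠ ⊤ :=
      Metric.hausdorffEdist_ne_top_of_nonempty_of_bounded hA'ne hA₀ne hA'bdd hA₀bdd
    set t : ℝ := (hausdorffEDist A' A₀).toReal with htdef
    have ht0 : 0 ≤ t := ENNReal.toReal_nonneg
    have hht : hausdorffEDist A' A₀ = ENNReal.ofReal t := (ENNReal.ofReal_toReal hfin').symm
    have ht : t = 0 := by
      by_contra htne
      have htpos : 0 < t := ht0.lt_of_ne (Ne.symm htne)
      have hcontr : hausdorffEDist A' A₀ ≤ ENNReal.ofReal (φ t) := by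
        conv_lhs => rw [← hA'fix, ← hA₀fix]
        exact fracOp_contract hm0 F.f hφ hc ht0 hht.le
      rw [hht, ENNReal.ofReal_le_ofReal_iff (hφ.1 t ht0)] at hcontr
      exact absurd (hcontr.trans_lt (hφ.2.2.2 t htpos)) (lt_irrefl t)
    have hzero : hausdorffEDist A' A₀ = 0 := by rw [hht, ht, ENNReal.ofReal_zero]
    have hcc := EMetric.hausdorffEdist_zero_iff_closure_eq_closure.1 hzero
    rwa [IsClosed.closure_eq hA'cl, IsClosed.closure_eq hA₀cl] at hcc
  · -- Part 2
    intro A hAne hAcl hAbdd hAfix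
    have hfix : ∀ (i : I) (x : Fin m → X), (∀ j, x j ∈ A) → F.f i x ∈ A := by
      intro i x hxA
      rw [← hAfix]
      exact subset_closure (Set.mem_iUnion.2 ⟨i, x, fun j _ => hxA j, rfl⟩)
    obtain ⟨a₀, ha₀⟩ := hAne
    set dA : ℝ := Metric.diam A with hdAdef
    have hdA : 0 ≤ dA := Metric.diam_nonneg
    -- distance bound inside the pieces
    have hCdist : ∀ (k : ℕ) (α : GCS I m),
        ∀ u ∈ tExt F.f k (trunc k α) '' allInXP A (k + 1),
        ∀ v ∈ tExt F.f k (trunc k α) '' allInXP A (k + 1), dist u v ≤ φ^[k + 1] dA := by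
      rintro k α - ⟨x, hx, rfl⟩ - ⟨y, hy, rfl⟩
      exact (tExt_dist F.f hm0 hφ hc k (trunc k α) x y).trans
        (iter_mono hφ (k + 1) (dXP_nonneg hm0 (k + 1) x y)
          (dXP_le_diam hm0 hAbdd (k + 1) x y hx hy))
    have hCsub : ∀ (k : ℕ) (α : GCS I m),
        tExt F.f k (trunc k α) '' allInXP A (k + 1) ⊆ A := by
      rintro k α - ⟨x, hx, rfl⟩
      exact tExt_mem F.f hfix k (trunc k α) x hx
    have hCnest : ∀ (k : ℕ) (α : GCS I m),
        tExt F.f (k + 1) (trunc (k + 1) α) '' allInXP A (k + 2) ⊆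
          tExt F.f k (trunc k α) '' allInXP A (k + 1) := by
      rintro k α - ⟨x, hx, rfl⟩
      exact ⟨mapLast F.f k α x, mapLast_mem F.f hfix k α x hx, (tExt_peel F.f k α x).symm⟩
    have hCmono : ∀ (k l : ℕ), k ≤ l → ∀ (α : GCS I m),
        tExt F.f l (trunc l α) '' allInXP A (l + 1) ⊆
          tExt F.f k (trunc k α) '' allInXP A (k + 1) := by
      intro k l hkl
      induction l, hkl using Nat.le_induction with
      | base => exact fun α => subset_rfl
      | succ l hl ih => exact fun α => (hCnest l α).trans (ih α)
    -- the approximating sequence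
    set z : GCS I m → ℕ → X := fun α k => tExt F.f k (trunc k α) (cstXP a₀ (k + 1))
      with hzdef
    have hz : ∀ (α : GCS I m) (k : ℕ),
        z α k ∈ tExt F.f k (trunc k α) '' allInXP A (k + 1) :=
      fun α k => ⟨cstXP a₀ (k + 1), cstXP_mem ha₀ (k + 1), rfl⟩
    have htend0 : Tendsto (fun N => φ^[N + 1] dA) atTop (𝓝 0) :=
      (tendsto_iter hφ hdA).comp (tendsto_add_atTop_nat 1)
    have hcz : ∀ α : GCS I m, CauchySeq (z α) := by
      intro α
      refine cauchySeq_of_le_tendsto_0 (fun N => φ^[N + 1] dA) ?_ htend0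
      intro n p N hn hp
      exact hCdist N α _ (hCmono N n hn α (hz α n)) _ (hCmono N p hp α (hz α p))
    choose π hπ using fun α => cauchySeq_tendsto_of_complete (hcz α)
    have hπC : ∀ (α : GCS I m) (k : ℕ),
        π α ∈ closure (tExt F.f k (trunc k α) '' allInXP A (k + 1)) := by
      intro α k
      refine isClosed_closure.mem_of_tendsto (hπ α) ?_
      refine eventually_atTop.2 ⟨k, fun l hl => subset_closure (hCmono k l hl α (hz α l))⟩
    have hdiamC : ∀ (k : ℕ) (α : GCS I m),
        Metric.diam (closure (tExt F.f k (trunc k α) '' allInXP A (k + 1))) ≤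
          φ^[k + 1] dA := by
      intro k α
      rw [Metric.diam_closure]
      exact Metric.diam_le_of_forall_dist_le (iter_nonneg hφ (k + 1) dA hdA) (hCdist k α)
    have hCbddcl : ∀ (k : ℕ) (α : GCS I m),
        Bornology.IsBounded (closure (tExt F.f k (trunc k α) '' allInXP A (k + 1))) :=
      fun k α => (hAbdd.subset (hCsub k α)).closure
    refine ⟨π, fun α => ?_, ?_⟩
    · ext y
      simp only [Set.mem_iInter, Set.mem_singleton_iff]
      constructor
      · intro hy
        have hdy : ∀ k : ℕ, dist y (π α) ≤ φ^[k + 1] dA := fun k =>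
          le_trans (Metric.dist_le_diam_of_mem (hCbddcl k α) (hy k) (hπC α k))
            (hdiamC k α)
        have : dist y (π α) ≤ 0 := ge_of_tendsto' htend0 hdy
        exact dist_le_zero.1 this
      · rintro rfl
        exact fun k => hπC α k
    · apply Set.Subset.antisymm
      · refine closure_minimal ?_ hAcl
        rintro - ⟨α, rfl⟩
        have h0 := A_eq_union F.f hAcl hAfix F.cont 0
        rw [h0]
        exact closure_mono (Set.subset_iUnion
          (fun w : Word I m 0 => tExt F.f 0 w '' allInXP A 1) (trunc 0 α)) (hπC α 0)
      · intro a haA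
        rw [Metric.mem_closure_iff]
        intro ε hε
        obtain ⟨k, hk⟩ := (htend0.eventually (gt_mem_nhds (half_pos hε))).exists
        have haA' : a ∈ closure (⋃ w : Word I m k, tExt F.f k w '' allInXP A (k + 1)) := by
          rw [← A_eq_union F.f hAcl hAfix F.cont k]
          exact haA
        rw [Metric.mem_closure_iff] at haA'
        obtain ⟨u, hu, hau⟩ := haA' (ε / 2) (half_pos hε)
        obtain ⟨w, x, hx, rfl⟩ : ∃ (w : Word I m k) (x : XP X m (k + 1)),
            x ∈ allInXP A (k + 1) ∧ tExt F.f k w x = u := by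
          obtain ⟨s, ⟨w, rfl⟩, hs⟩ := hu
          obtain ⟨x, hx, hxe⟩ := hs
          exact ⟨w, x, hx, hxe⟩
        refine ⟨π (extend k w), ⟨extend k w, rfl⟩, ?_⟩
        have h1 : tExt F.f k w x ∈
            tExt F.f k (trunc k (extend k w)) '' allInXP A (k + 1) := by
          rw [trunc_extend]
          exact ⟨x, hx, rfl⟩
        have h2 : dist (tExt F.f k w x) (π (extend k w)) ≤ φ^[k + 1] dA := by
          refine le_trans (Metric.dist_le_diam_of_mem (hCbddcl k (extend k w))
            (subset_closure h1) (hπC (extend k w) k)) (hdiamC k (extend k w))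
        calc dist a (π (extend k w))
            ≤ dist a (tExt F.f k w x) + dist (tExt F.f k w x) (π (extend k w)) :=
              dist_triangle _ _ _
          _ < ε / 2 + ε / 2 := add_lt_add_of_lt_of_le hau (h2.trans hk.le)
          _ = ε := add_halves ε
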